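/- Let w : [0,∞) → ℝ be a bounded continuous nonnegative function, let ν be a finite nonnegative Borel measure on [0,∞), let α > 0, δ > 0, T > 0, and let Θ be a finite nonnegative Borel measure on [0,∞). Suppose μ, η : [0, T] → (finite nonnegative Borel measures on [0,∞)) are continuous with respect to the total variation norm, satisfy μ(0) = η(0) = Θ, satisfy ∫ w dμ(t) ≥ δ and ∫ w dη(t) ≥ δ for all t ∈ [0, T], and both satisfy the fluid model equation: for every continuously differentiable g : [0,∞) → ℝ with g and g' bounded, and every t ∈ [0, T], ∫ g dμ(t) = ∫ g dΘ − ∫₀^t (∫ g'·w dμ(s))/(∫ w dμ(s)) ds + α·t·∫ g dν (and the same with μ replaced by η). Then for every continuously differentiable g with ‖g‖_∞ ≤ 1 and ‖g'‖_∞ ≤ 1 and every t ∈ [0, T], |∫ g dμ(t) − ∫ g dη(t)| ≤ (2‖w‖_∞/δ) · ∫₀^t ‖μ(s) − η(s)‖_TV ds. -/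

import Mathlib

/-!
Subtracting the two fluid model equations, the initial and arrival terms cancel, so
`⟨g, μ(t)⟩ - ⟨g, η(t)⟩` is the time integral of the difference of the drifts `⟨g'w, ·⟩ / ⟨w, ·⟩`.
Integrals of a function bounded by `C` against two measures differ by at most `C` times their
total variation distance (integrate against the signed measure `μ - η`). Since `|g'| ≤ 1` gives
`|⟨g'w, μ⟩| ≤ ⟨w, μ⟩` and both `w`-masses are at least `δ`, the splitting
`c/d - a/b = (c - a)/d + a(b - d)/(bd)` bounds each drift difference by
`2‖w‖_∞/δ · ‖μ(s) - η(s)‖_TV`. Total variation continuity of the paths makes all integrands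
continuous in time, hence integrable.
-/

open MeasureTheory

/-- The total variation norm `‖μ - η‖_TV` of the difference of two finite measures. -/
noncomputable def tvNorm (μ η : Measure ℝ) [IsFiniteMeasure μ] [IsFiniteMeasure η] : ℝ :=
  ((μ.toSignedMeasure - η.toSignedMeasure).totalVariation Set.univ).toReal

/-- The supremum norm `‖f‖_∞` of a real-valued function. -/
noncomputable def supNorm (f : ℝ → ℝ) : ℝ := ⨆ x, |f x|

open Filter Topology

section TotalVariation

variable {μ η ξ : Measure ℝ} [IsFiniteMeasure μ] [IsFiniteMeasure η] [IsFiniteMeasure ξ]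

lemma tvNorm_eq_measureReal :
    tvNorm μ η = (μ.toSignedMeasure - η.toSignedMeasure).totalVariation.real Set.univ := rfl

lemma tvNorm_nonneg : 0 ≤ tvNorm μ η := ENNReal.toReal_nonneg

lemma tvNorm_comm : tvNorm μ η = tvNorm η μ := by
  rw [tvNorm, tvNorm, ← neg_sub, SignedMeasure.totalVariation_neg]

lemma tvNorm_triangle : tvNorm μ ξ ≤ tvNorm μ η + tvNorm η ξ := by
  simp only [tvNorm_eq_measureReal]
  rw [← sub_add_sub_cancel _ η.toSignedMeasure, ← measureReal_add_apply]
  refine ENNReal.toReal_mono (measure_ne_top _ _) ?_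
  simp only [SignedMeasure.totalVariation_eq_variation]
  exact VectorMeasure.variation_add_le _

lemma abs_integral_sub_integral_le_mul_tvNorm {f : ℝ → ℝ} {C : ℝ} (hf : Measurable f)
    (hC : ∀ x, |f x| ≤ C) : |∫ x, f x ∂μ - ∫ x, f x ∂η| ≤ C * tvNorm μ η := by
  have hint : ∀ (ν : Measure ℝ) [IsFiniteMeasure ν], ν.toSignedMeasure.Integrable f :=
    fun ν _ => by
      simpa [VectorMeasure.Integrable] using .of_bound hf.aestronglyMeasurable C (.of_forall hC)
  set σ := μ.toSignedMeasure - η.toSignedMeasure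
  have hσ : ∫ᵛ x, f x ∂<•σ = ∫ x, f x ∂μ - ∫ x, f x ∂η := by
    rw [VectorMeasure.integral_sub_vectorMeasure (hint μ) (hint η),
      VectorMeasure.integral_toSignedMeasure, VectorMeasure.integral_toSignedMeasure]
  have hC' : ∫ x, ‖f x‖ ∂σ.totalVariation ≤ C * σ.totalVariation.real Set.univ := by
    calc ∫ x, ‖f x‖ ∂σ.totalVariation ≤ ∫ _, C ∂σ.totalVariation :=
          integral_mono_of_nonneg (.of_forall fun _ => norm_nonneg _) (integrable_const C)
            (.of_forall hC)
      _ = C * σ.totalVariation.real Set.univ := by rw [integral_const, smul_eq_mul, mul_comm]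
  calc |∫ x, f x ∂μ - ∫ x, f x ∂η| = ‖∫ᵛ x, f x ∂<•σ‖ := by rw [hσ, Real.norm_eq_abs]
    _ ≤ ‖(ContinuousLinearMap.lsmul ℝ ℝ).flip‖ * ∫ x, ‖f x‖ ∂σ.totalVariation := by
        rw [SignedMeasure.totalVariation_eq_variation]
        exact VectorMeasure.norm_integral_le_integral_norm
    _ ≤ 1 * (C * σ.totalVariation.real Set.univ) := by
        gcongr
        exact (ContinuousLinearMap.opNorm_flip _).trans_le ContinuousLinearMap.opNorm_lsmul_le
    _ = C * tvNorm μ η := one_mul _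


lemma abs_tvNorm_sub_tvNorm_le {μ' η' : Measure ℝ} [IsFiniteMeasure μ'] [IsFiniteMeasure η'] :
    |tvNorm μ η - tvNorm μ' η'| ≤ tvNorm μ μ' + tvNorm η η' := by
  have h₁ := tvNorm_triangle (μ := μ') (η := μ) (ξ := η')
  have h₂ := tvNorm_triangle (μ := μ) (η := η) (ξ := η')
  have h₃ := tvNorm_triangle (μ := μ) (η := μ') (ξ := η)
  have h₄ := tvNorm_triangle (μ := μ') (η := η') (ξ := η)
  rw [tvNorm_comm (μ := μ') (η := μ)] at h₁
  rw [tvNorm_comm (μ := η') (η := η)] at h₄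
  rw [abs_le]
  constructor <;> linarith

end TotalVariation

lemma abs_le_supNorm {f : ℝ → ℝ} (hf : ∃ C, ∀ x, |f x| ≤ C) (x : ℝ) : |f x| ≤ supNorm f := by
  obtain ⟨C, hC⟩ := hf
  exact le_ciSup ⟨C, Set.forall_mem_range.2 hC⟩ x

section Continuity

variable {τ : Type*} [TopologicalSpace τ] {S : Set τ} {μ η : τ → Measure ℝ}
  [∀ s, IsFiniteMeasure (μ s)] [∀ s, IsFiniteMeasure (η s)]

lemma continuousOn_integral_of_tendsto_tvNorm
    (hμ : ∀ s ∈ S, Tendsto (fun s' => tvNorm (μ s) (μ s')) (𝓝[S] s) (𝓝 0))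
    {f : ℝ → ℝ} {C : ℝ} (hf : Measurable f) (hC : ∀ x, |f x| ≤ C) :
    ContinuousOn (fun s => ∫ x, f x ∂(μ s)) S := by
  intro s hs
  rw [ContinuousWithinAt, tendsto_iff_norm_sub_tendsto_zero]
  refine squeeze_zero (fun _ => norm_nonneg _) (fun s' => ?_)
    (by simpa using (hμ s hs).const_mul C)
  rw [Real.norm_eq_abs, abs_sub_comm]
  exact abs_integral_sub_integral_le_mul_tvNorm hf hC

lemma continuousOn_tvNorm_of_tendsto
    (hμ : ∀ s ∈ S, Tendsto (fun s' => tvNorm (μ s) (μ s')) (𝓝[S] s) (𝓝 0))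
    (hη : ∀ s ∈ S, Tendsto (fun s' => tvNorm (η s) (η s')) (𝓝[S] s) (𝓝 0)) :
    ContinuousOn (fun s => tvNorm (μ s) (η s)) S := by
  intro s hs
  rw [ContinuousWithinAt, tendsto_iff_norm_sub_tendsto_zero]
  refine squeeze_zero (fun _ => norm_nonneg _) (fun s' => ?_)
    (by simpa using (hμ s hs).add (hη s hs))
  rw [Real.norm_eq_abs, abs_sub_comm]
  exact abs_tvNorm_sub_tvNorm_le

end Continuity

lemma tendsto_tvNorm_nhdsWithin {μ : ℝ → Measure ℝ} [∀ s, IsFiniteMeasure (μ s)] {S : Set ℝ}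
    (h : ∀ s ∈ S, ∀ ε > (0:ℝ), ∃ ρ > (0:ℝ), ∀ s' ∈ S, |s' - s| < ρ → tvNorm (μ s) (μ s') < ε) :
    ∀ s ∈ S, Tendsto (fun s' => tvNorm (μ s) (μ s')) (𝓝[S] s) (𝓝 0) := by
  intro s hs
  rw [Metric.tendsto_nhdsWithin_nhds]
  intro ε hε
  obtain ⟨ρ, hρ, hclose⟩ := h s hs ε hε
  refine ⟨ρ, hρ, fun {s'} hs' hdist => ?_⟩
  rw [Real.dist_eq, sub_zero, abs_of_nonneg tvNorm_nonneg]
  exact hclose s' hs' hdist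

noncomputable def fluidDrift (w g' : ℝ → ℝ) (μ : Measure ℝ) : ℝ :=
  (∫ x, g' x * w x ∂μ) / ∫ x, w x ∂μ

lemma abs_div_sub_div_le {a b c d δ ε : ℝ} (hδ : 0 < δ) (hab : |a| ≤ b) (hb : δ ≤ b)
    (hd : δ ≤ d) (hac : |a - c| ≤ ε) (hbd : |b - d| ≤ ε) : |c / d - a / b| ≤ 2 * ε / δ := by
  have hb0 : 0 < b := hδ.trans_le hb
  have hd0 : 0 < d := hδ.trans_le hd
  have hε : 0 ≤ ε := (abs_nonneg _).trans hac
  have hsplit : c / d - a / b = (c - a) / d + a * (b - d) / (b * d) := by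
    field_simp
    ring
  have h₁ : |(c - a) / d| ≤ ε / δ := by
    rw [abs_div, abs_of_pos hd0, abs_sub_comm]
    exact div_le_div₀ hε hac hδ hd
  have h₂ : |a * (b - d) / (b * d)| ≤ ε / δ := by
    rw [abs_div, abs_mul, abs_of_pos (mul_pos hb0 hd0)]
    calc |a| * |b - d| / (b * d) ≤ b * ε / (b * d) := by gcongr
      _ = ε / d := mul_div_mul_left _ _ hb0.ne'
      _ ≤ ε / δ := div_le_div_of_nonneg_left hε hδ hd
  calc |c / d - a / b| ≤ |(c - a) / d| + |a * (b - d) / (b * d)| := hsplit ▸ abs_add_le _ _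
    _ ≤ ε / δ + ε / δ := add_le_add h₁ h₂
    _ = 2 * ε / δ := by ring

section FluidDrift

variable {w g' : ℝ → ℝ} {W : ℝ}

lemma abs_integral_mul_le_integral {μ : Measure ℝ} (hw : Integrable w μ) (hw0 : ∀ x, 0 ≤ w x)
    (hg' : ∀ x, |g' x| ≤ 1) : |∫ x, g' x * w x ∂μ| ≤ ∫ x, w x ∂μ :=
  norm_integral_le_of_norm_le (f := fun x => g' x * w x) hw <| .of_forall fun x => by
    rw [Real.norm_eq_abs, abs_mul, abs_of_nonneg (hw0 x)]
    exact mul_le_of_le_one_left (hw0 x) (hg' x)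

lemma abs_fluidDrift_sub_fluidDrift_le {μ η : Measure ℝ} [IsFiniteMeasure μ] [IsFiniteMeasure η]
    {δ : ℝ} (hw : Measurable w) (hw0 : ∀ x, 0 ≤ w x) (hW : ∀ x, |w x| ≤ W) (hg' : Measurable g')
    (hg'1 : ∀ x, |g' x| ≤ 1) (hδ : 0 < δ) (hμ : δ ≤ ∫ x, w x ∂μ) (hη : δ ≤ ∫ x, w x ∂η) :
    |fluidDrift w g' η - fluidDrift w g' μ| ≤ 2 * W / δ * tvNorm μ η := by
  have hg'w : ∀ x, |g' x * w x| ≤ W := fun x => by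
    rw [abs_mul]
    exact mul_le_of_le_one_left (abs_nonneg _) (hg'1 x) |>.trans (hW x)
  calc |fluidDrift w g' η - fluidDrift w g' μ| ≤ 2 * (W * tvNorm μ η) / δ :=
        abs_div_sub_div_le hδ (abs_integral_mul_le_integral
          (.of_bound hw.aestronglyMeasurable W (.of_forall hW)) hw0 hg'1) hμ hη
          (abs_integral_sub_integral_le_mul_tvNorm (hg'.mul hw) hg'w)
          (abs_integral_sub_integral_le_mul_tvNorm hw hW)
    _ = 2 * W / δ * tvNorm μ η := by ring

lemma continuousOn_fluidDrift {τ : Type*} [TopologicalSpace τ] {S : Set τ} {μ : τ → Measure ℝ}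
    [∀ s, IsFiniteMeasure (μ s)]
    (hμ : ∀ s ∈ S, Tendsto (fun s' => tvNorm (μ s) (μ s')) (𝓝[S] s) (𝓝 0))
    {C : ℝ} (hw : Measurable w) (hW : ∀ x, |w x| ≤ W) (hg' : Measurable g')
    (hC : ∀ x, |g' x| ≤ C) (hpos : ∀ s ∈ S, ∫ x, w x ∂(μ s) ≠ 0) :
    ContinuousOn (fun s => fluidDrift w g' (μ s)) S :=
  (continuousOn_integral_of_tendsto_tvNorm hμ (hg'.mul hw) (C := C * W) fun x => by
      rw [Pi.mul_apply, abs_mul]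
      exact mul_le_mul (hC x) (hW x) (abs_nonneg _) ((abs_nonneg _).trans (hC x))).div
    (continuousOn_integral_of_tendsto_tvNorm hμ hw hW) hpos

end FluidDrift

theorem stmt_4_general (w : ℝ → ℝ) (hwcont : Continuous w) (hwnonneg : ∀ x, 0 ≤ w x)
    (hwbdd : ∃ C, ∀ x, |w x| ≤ C)
    (ν : Measure ℝ)
    (α δ T : ℝ) (hδ : 0 < δ)
    (Θ : Measure ℝ)
    (μ η : ℝ → Measure ℝ)
    [∀ s, IsFiniteMeasure (μ s)] [∀ s, IsFiniteMeasure (η s)]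
    (hμcont : ∀ s ∈ Set.Icc (0:ℝ) T, ∀ ε > (0:ℝ), ∃ ρ > (0:ℝ),
      ∀ s' ∈ Set.Icc (0:ℝ) T, |s' - s| < ρ → tvNorm (μ s) (μ s') < ε)
    (hηcont : ∀ s ∈ Set.Icc (0:ℝ) T, ∀ ε > (0:ℝ), ∃ ρ > (0:ℝ),
      ∀ s' ∈ Set.Icc (0:ℝ) T, |s' - s| < ρ → tvNorm (η s) (η s') < ε)
    (hμw : ∀ s ∈ Set.Icc (0:ℝ) T, δ ≤ ∫ x, w x ∂(μ s))
    (hηw : ∀ s ∈ Set.Icc (0:ℝ) T, δ ≤ ∫ x, w x ∂(η s))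
    (hμeq : ∀ g g' : ℝ → ℝ, (∀ x, HasDerivAt g (g' x) x) → Continuous g' →
      (∃ C, ∀ x, |g x| ≤ C) → (∃ C, ∀ x, |g' x| ≤ C) →
      ∀ t ∈ Set.Icc (0:ℝ) T,
        (∫ x, g x ∂(μ t)) = (∫ x, g x ∂Θ)
          - (∫ s in (0:ℝ)..t, (∫ x, g' x * w x ∂(μ s)) / (∫ x, w x ∂(μ s)))
          + α * t * ∫ x, g x ∂ν)
    (hηeq : ∀ g g' : ℝ → ℝ, (∀ x, HasDerivAt g (g' x) x) → Continuous g' →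
      (∃ C, ∀ x, |g x| ≤ C) → (∃ C, ∀ x, |g' x| ≤ C) →
      ∀ t ∈ Set.Icc (0:ℝ) T,
        (∫ x, g x ∂(η t)) = (∫ x, g x ∂Θ)
          - (∫ s in (0:ℝ)..t, (∫ x, g' x * w x ∂(η s)) / (∫ x, w x ∂(η s)))
          + α * t * ∫ x, g x ∂ν) :
    ∀ g g' : ℝ → ℝ, (∀ x, HasDerivAt g (g' x) x) → Continuous g' →
      (∀ x, |g x| ≤ 1) → (∀ x, |g' x| ≤ 1) →
      ∀ t ∈ Set.Icc (0:ℝ) T,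
        |(∫ x, g x ∂(μ t)) - ∫ x, g x ∂(η t)|
          ≤ (2 * supNorm w / δ) * ∫ s in (0:ℝ)..t, tvNorm (μ s) (η s) := by
  intro g g' hg hg'cont hg1 hg'1 t ht
  have hW := abs_le_supNorm hwbdd
  have hμ := tendsto_tvNorm_nhdsWithin hμcont
  have hη := tendsto_tvNorm_nhdsWithin hηcont
  have hsub : Set.uIcc 0 t ⊆ Set.Icc 0 T := by
    rw [Set.uIcc_of_le ht.1]
    exact Set.Icc_subset_Icc_right ht.2
  have hdrift : ∀ ξ : ℝ → Measure ℝ, [∀ s, IsFiniteMeasure (ξ s)] →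
      (∀ s ∈ Set.Icc 0 T, Tendsto (fun s' => tvNorm (ξ s) (ξ s')) (𝓝[Set.Icc 0 T] s) (𝓝 0)) →
      (∀ s ∈ Set.Icc 0 T, δ ≤ ∫ x, w x ∂(ξ s)) →
      IntervalIntegrable (fun s => fluidDrift w g' (ξ s)) volume 0 t :=
    fun ξ _ hξ hξw => ((continuousOn_fluidDrift hξ hwcont.measurable hW hg'cont.measurable hg'1
      fun s hs => (hδ.trans_le (hξw s hs)).ne').mono hsub).intervalIntegrable
  have hdiff : (∫ x, g x ∂(μ t)) - ∫ x, g x ∂(η t)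
      = ∫ s in (0:ℝ)..t, (fluidDrift w g' (η s) - fluidDrift w g' (μ s)) := by
    rw [hμeq g g' hg hg'cont ⟨1, hg1⟩ ⟨1, hg'1⟩ t ht, hηeq g g' hg hg'cont ⟨1, hg1⟩ ⟨1, hg'1⟩ t ht,
      intervalIntegral.integral_sub (hdrift η hη hηw) (hdrift μ hμ hμw)]
    simp only [fluidDrift]
    ring
  have hbound : IntervalIntegrable (fun s => 2 * supNorm w / δ * tvNorm (μ s) (η s)) volume 0 t :=
    ((continuousOn_const.mul (continuousOn_tvNorm_of_tendsto hμ hη)).mono hsub).intervalIntegrable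
  rw [hdiff, ← intervalIntegral.integral_const_mul, ← Real.norm_eq_abs]
  refine intervalIntegral.norm_integral_le_of_norm_le ht.1 (.of_forall fun s hs => ?_) hbound
  have hsT : s ∈ Set.Icc 0 T := ⟨hs.1.le, hs.2.trans ht.2⟩
  exact abs_fluidDrift_sub_fluidDrift_le hwcont.measurable hwnonneg hW hg'cont.measurable hg'1 hδ
    (hμw s hsT) (hηw s hsT)

/-- a priori estimate behind uniqueness of the fluid limit.  If two
total-variation-continuous measure-valued paths `μ, η` on `[0, T]` start from the same
initial measure `Θ`, keep their `w`-masses above `δ`, and both solve the fluid model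
equation `⟨g, μ(t)⟩ = ⟨g, Θ⟩ − ∫₀ᵗ ⟨g'w, μ(s)⟩/⟨w, μ(s)⟩ ds + α t ⟨g, ν⟩` for all
bounded `C¹` test functions `g` with bounded derivative, then for every such `g` with
`‖g‖_∞ ≤ 1`, `‖g'‖_∞ ≤ 1` and every `t ∈ [0, T]`,
`|⟨g, μ(t)⟩ − ⟨g, η(t)⟩| ≤ (2‖w‖_∞/δ) ∫₀ᵗ ‖μ(s) − η(s)‖_TV ds`. -/
theorem stmt_4 (w : ℝ → ℝ) (hwcont : Continuous w) (hwnonneg : ∀ x, 0 ≤ w x)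
    (hwbdd : ∃ C, ∀ x, |w x| ≤ C)
    (ν : Measure ℝ) [IsFiniteMeasure ν] (hνsupp : ν (Set.Iio 0) = 0)
    (α δ T : ℝ) (hα : 0 < α) (hδ : 0 < δ) (hT : 0 < T)
    (Θ : Measure ℝ) [IsFiniteMeasure Θ] (hΘsupp : Θ (Set.Iio 0) = 0)
    (μ η : ℝ → Measure ℝ)
    [∀ s, IsFiniteMeasure (μ s)] [∀ s, IsFiniteMeasure (η s)]
    (hμsupp : ∀ s ∈ Set.Icc (0:ℝ) T, μ s (Set.Iio 0) = 0)
    (hηsupp : ∀ s ∈ Set.Icc (0:ℝ) T, η s (Set.Iio 0) = 0)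
    (hμ0 : μ 0 = Θ) (hη0 : η 0 = Θ)
    (hμcont : ∀ s ∈ Set.Icc (0:ℝ) T, ∀ ε > (0:ℝ), ∃ ρ > (0:ℝ),
      ∀ s' ∈ Set.Icc (0:ℝ) T, |s' - s| < ρ → tvNorm (μ s) (μ s') < ε)
    (hηcont : ∀ s ∈ Set.Icc (0:ℝ) T, ∀ ε > (0:ℝ), ∃ ρ > (0:ℝ),
      ∀ s' ∈ Set.Icc (0:ℝ) T, |s' - s| < ρ → tvNorm (η s) (η s') < ε)
    (hμw : ∀ s ∈ Set.Icc (0:ℝ) T, δ ≤ ∫ x, w x ∂(μ s))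
    (hηw : ∀ s ∈ Set.Icc (0:ℝ) T, δ ≤ ∫ x, w x ∂(η s))
    (hμeq : ∀ g g' : ℝ → ℝ, (∀ x, HasDerivAt g (g' x) x) → Continuous g' →
      (∃ C, ∀ x, |g x| ≤ C) → (∃ C, ∀ x, |g' x| ≤ C) →
      ∀ t ∈ Set.Icc (0:ℝ) T,
        (∫ x, g x ∂(μ t)) = (∫ x, g x ∂Θ)
          - (∫ s in (0:ℝ)..t, (∫ x, g' x * w x ∂(μ s)) / (∫ x, w x ∂(μ s)))
          + α * t * ∫ x, g x ∂ν)
    (hηeq : ∀ g g' : ℝ → ℝ, (∀ x, HasDerivAt g (g' x) x) → Continuous g' →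
      (∃ C, ∀ x, |g x| ≤ C) → (∃ C, ∀ x, |g' x| ≤ C) →
      ∀ t ∈ Set.Icc (0:ℝ) T,
        (∫ x, g x ∂(η t)) = (∫ x, g x ∂Θ)
          - (∫ s in (0:ℝ)..t, (∫ x, g' x * w x ∂(η s)) / (∫ x, w x ∂(η s)))
          + α * t * ∫ x, g x ∂ν) :
    ∀ g g' : ℝ → ℝ, (∀ x, HasDerivAt g (g' x) x) → Continuous g' →
      (∀ x, |g x| ≤ 1) → (∀ x, |g' x| ≤ 1) →
      ∀ t ∈ Set.Icc (0:ℝ) T,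
        |(∫ x, g x ∂(μ t)) - ∫ x, g x ∂(η t)|
          ≤ (2 * supNorm w / δ) * ∫ s in (0:ℝ)..t, tvNorm (μ s) (η s) :=
  stmt_4_general w hwcont hwnonneg hwbdd ν α δ T hδ Θ μ η hμcont hηcont hμw hηw hμeq hηeq
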